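/- Suppose that for reals r > 2 and integer n ≥ 1 there are θ ∈ [−1, 0] and the quantity E = (1/π)( ∑_{k=n}^∞ 1/k^r + (θ/n) ∑_{k=1}^∞ k/(k+n)^r ). Then E = (1/n^r)·(n/r)·( 1/π + θ̄·( 1/(r−2) + r/n ) ) for some θ̄ ∈ (−2/π, 2/π). -/

import Mathlib

/-!
Bernoulli's inequality with a nonpositive exponent squeezes the telescoping differences
`a ^ (1 - p) - (a + 1) ^ (1 - p)` between `(p - 1) (a + 1) ^ (-p)` and `(p - 1) a ^ (-p)`, which pins
`u = n ^ (r - 1) ∑ (n + k) ^ (-r)` to `[1 / (r - 1), 1 / (r - 1) + 1 / n]`. Splitting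
`(k + 1) / (k + 1 + n) ^ r = (n + k + 1) ^ (1 - r) - n (n + k + 1) ^ (-r)` bounds
`w = n ^ (r - 2) ∑ (k + 1) / (k + 1 + n) ^ r` by `1 / (r - 2) + 1 / n - u`. Then
`T = r (u + θ w) - 1` satisfies `|T| < 2 (1 / (r - 2) + r / n)`, and since `π n ^ (r - 1) E = u + θ w`,
`θ̄ = T / (π (1 / (r - 2) + r / n))` works.
-/

open Real Filter Topology

lemma one_add_mul_self_le_rpow_one_add_of_nonpos {s p : ℝ} (hs : -1 < s) (hp : p ≤ 0) :
    1 + p * s ≤ (1 + s) ^ p := by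
  have h : 0 < 1 + s := by linarith
  have hlog : p * s ≤ p * log (1 + s) :=
    mul_le_mul_of_nonpos_left (by linarith [log_le_sub_one_of_pos h]) hp
  calc 1 + p * s ≤ p * log (1 + s) + 1 := by linarith
    _ ≤ exp (p * log (1 + s)) := add_one_le_exp _
    _ = (1 + s) ^ p := by rw [rpow_def_of_pos h, mul_comm]

section Telescoping

variable {a p : ℝ}

lemma rpow_neg_eq_rpow_one_sub_div (ha : 0 < a) (p : ℝ) : a ^ (-p) = a ^ (1 - p) / a := by
  rw [← rpow_sub_one ha.ne', sub_sub_cancel_left]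

lemma rpow_one_sub_sub_rpow_one_sub_le (ha : 0 < a) (hp : 1 ≤ p) :
    a ^ (1 - p) - (a + 1) ^ (1 - p) ≤ (p - 1) * a ^ (-p) := by
  have hbern := one_add_mul_self_le_rpow_one_add_of_nonpos (s := a⁻¹)
    (by linarith [inv_pos.2 ha]) (by linarith : 1 - p ≤ 0)
  have hsplit : (a + 1) ^ (1 - p) = (1 + a⁻¹) ^ (1 - p) * a ^ (1 - p) := by
    rw [← mul_rpow (by positivity) ha.le]; congr 1; field_simp
  have := mul_le_mul_of_nonneg_right hbern (rpow_pos_of_pos ha (1 - p)).le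
  rw [hsplit, rpow_neg_eq_rpow_one_sub_div ha]
  field_simp at this ⊢
  linarith

lemma mul_rpow_neg_le_rpow_one_sub_sub (ha : 0 < a) (hp : 1 ≤ p) :
    (p - 1) * (a + 1) ^ (-p) ≤ a ^ (1 - p) - (a + 1) ^ (1 - p) := by
  have ha₁ : 0 < a + 1 := by linarith
  have hinv : (a + 1)⁻¹ < 1 := inv_lt_one_of_one_lt₀ (by linarith)
  have hbern := one_add_mul_self_le_rpow_one_add_of_nonpos (s := -(a + 1)⁻¹)
    (by linarith) (by linarith : 1 - p ≤ 0)
  have hsplit : a ^ (1 - p) = (1 + -(a + 1)⁻¹) ^ (1 - p) * (a + 1) ^ (1 - p) := by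
    rw [← mul_rpow (by linarith) ha₁.le]; congr 1; field_simp; ring
  have := mul_le_mul_of_nonneg_right hbern (rpow_pos_of_pos ha₁ (1 - p)).le
  rw [hsplit, rpow_neg_eq_rpow_one_sub_div ha₁]
  field_simp at this ⊢
  linarith

end Telescoping

lemma hasSum_sub_succ_of_antitone {f : ℕ → ℝ} (hf : Antitone f) {l : ℝ}
    (hl : Tendsto f atTop (𝓝 l)) : HasSum (fun k ↦ f k - f (k + 1)) (f 0 - l) := by
  rw [hasSum_iff_tendsto_nat_of_nonneg fun k ↦ sub_nonneg.2 (hf k.le_succ)]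
  simpa only [Finset.sum_range_sub'] using tendsto_const_nhds.sub hl

section ShiftedPSeries

variable {c p : ℝ}

lemma hasSum_add_nat_rpow_sub {s : ℝ} (hc : 0 < c) (hs : s < 0) :
    HasSum (fun k : ℕ ↦ (c + k) ^ s - (c + k + 1) ^ s) (c ^ s) := by
  have hanti : Antitone fun k : ℕ ↦ (c + k) ^ s := fun i j hij ↦
    rpow_le_rpow_of_nonpos (by positivity) (by gcongr) hs.le
  have hlim : Tendsto (fun k : ℕ ↦ (c + k) ^ s) atTop (𝓝 0) := by
    have := (tendsto_rpow_neg_atTop (neg_pos.2 hs)).comp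
      (tendsto_atTop_add_const_left _ c tendsto_natCast_atTop_atTop)
    simpa only [neg_neg, Function.comp_def] using this
  simpa [add_assoc] using hasSum_sub_succ_of_antitone hanti hlim

lemma summable_add_nat_rpow_neg (hc : 0 < c) (hp : 1 < p) :
    Summable fun k : ℕ ↦ (c + k) ^ (-p) := by
  refine ((summable_one_div_nat_add_rpow c p).2 hp).congr fun k ↦ ?_
  rw [abs_of_pos (by positivity), rpow_neg (by positivity), one_div, add_comm]

lemma summable_add_nat_succ_rpow_neg (hc : 0 < c) (hp : 1 < p) :
    Summable fun k : ℕ ↦ (c + k + 1) ^ (-p) := by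
  simpa only [add_right_comm] using summable_add_nat_rpow_neg (c := c + 1) (by linarith) hp

lemma rpow_sub_one_mul_rpow_one_sub (hc : 0 < c) (p : ℝ) : c ^ (p - 1) * c ^ (1 - p) = 1 := by
  rw [← rpow_add hc, sub_add_sub_cancel, sub_self, rpow_zero]

lemma one_div_le_rpow_mul_tsum_add_nat_rpow_neg (hc : 0 < c) (hp : 1 < p) :
    1 / (p - 1) ≤ c ^ (p - 1) * ∑' k : ℕ, (c + k) ^ (-p) := by
  have htele : c ^ (1 - p) ≤ (p - 1) * ∑' k : ℕ, (c + k) ^ (-p) := by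
    rw [← tsum_mul_left]
    refine hasSum_le (fun k ↦ ?_) (hasSum_add_nat_rpow_sub hc (by linarith))
      ((summable_add_nat_rpow_neg hc hp).mul_left _).hasSum
    exact rpow_one_sub_sub_rpow_one_sub_le (by positivity) hp.le
  rw [div_le_iff₀' (by linarith)]
  calc 1 = c ^ (p - 1) * c ^ (1 - p) := (rpow_sub_one_mul_rpow_one_sub hc p).symm
    _ ≤ c ^ (p - 1) * ((p - 1) * ∑' k : ℕ, (c + k) ^ (-p)) := by gcongr
    _ = (p - 1) * (c ^ (p - 1) * ∑' k : ℕ, (c + k) ^ (-p)) := by ring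

lemma rpow_mul_tsum_add_nat_succ_rpow_neg_le (hc : 0 < c) (hp : 1 < p) :
    c ^ (p - 1) * ∑' k : ℕ, (c + k + 1) ^ (-p) ≤ 1 / (p - 1) := by
  have htele : (p - 1) * ∑' k : ℕ, (c + k + 1) ^ (-p) ≤ c ^ (1 - p) := by
    rw [← tsum_mul_left]
    refine hasSum_le (fun k ↦ ?_) ((summable_add_nat_succ_rpow_neg hc hp).mul_left _).hasSum
      (hasSum_add_nat_rpow_sub hc (by linarith))
    exact mul_rpow_neg_le_rpow_one_sub_sub (by positivity) hp.le
  rw [le_div_iff₀' (by linarith)]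
  calc (p - 1) * (c ^ (p - 1) * ∑' k : ℕ, (c + k + 1) ^ (-p))
      = c ^ (p - 1) * ((p - 1) * ∑' k : ℕ, (c + k + 1) ^ (-p)) := by ring
    _ ≤ c ^ (p - 1) * c ^ (1 - p) := by gcongr
    _ = 1 := rpow_sub_one_mul_rpow_one_sub hc p

end ShiftedPSeries

section NormalizedSeries

variable {c r : ℝ}

lemma tsum_one_div_add_nat_rpow (hc : 0 < c) :
    ∑' k : ℕ, 1 / (c + k) ^ r = ∑' k : ℕ, (c + k) ^ (-r) :=
  tsum_congr fun k ↦ by rw [one_div, ← rpow_neg (by positivity)]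

lemma rpow_mul_tsum_one_div_add_nat_rpow (hc : 0 < c) (hr : 1 < r) :
    c ^ (r - 1) * ∑' k : ℕ, 1 / (c + k) ^ r =
      1 / c + c ^ (r - 1) * ∑' k : ℕ, (c + k + 1) ^ (-r) := by
  rw [tsum_one_div_add_nat_rpow hc, (summable_add_nat_rpow_neg hc hr).tsum_eq_zero_add, mul_add]
  push_cast
  rw [add_zero, ← rpow_add hc, show r - 1 + -r = -1 by ring, rpow_neg_one, one_div]
  simp only [add_assoc]

lemma tsum_succ_div_rpow (hc : 0 < c) (hr : 2 < r) :
    ∑' k : ℕ, ((k : ℝ) + 1) / ((k : ℝ) + 1 + c) ^ r =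
      ∑' k : ℕ, (c + k + 1) ^ (1 - r) - c * ∑' k : ℕ, (c + k + 1) ^ (-r) := by
  have hsum := summable_add_nat_succ_rpow_neg hc (p := r - 1) (by linarith)
  rw [neg_sub] at hsum
  rw [← tsum_mul_left,
    ← hsum.tsum_sub ((summable_add_nat_succ_rpow_neg hc (by linarith)).mul_left c)]
  refine tsum_congr fun k ↦ ?_
  have hx : 0 < c + k + 1 := by positivity
  rw [show (k : ℝ) + 1 + c = c + k + 1 by ring, rpow_sub hx, rpow_one, rpow_neg hx.le]
  field_simp
  ring

lemma rpow_mul_tsum_one_div_mem (hc : 0 < c) (hr : 1 < r) :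
    c ^ (r - 1) * ∑' k : ℕ, 1 / (c + k) ^ r ∈ Set.Icc (1 / (r - 1)) (1 / c + 1 / (r - 1)) := by
  constructor
  · rw [tsum_one_div_add_nat_rpow hc]
    exact one_div_le_rpow_mul_tsum_add_nat_rpow_neg hc hr
  · rw [rpow_mul_tsum_one_div_add_nat_rpow hc hr]
    exact add_le_add_right (rpow_mul_tsum_add_nat_succ_rpow_neg_le hc hr) _

lemma rpow_mul_tsum_succ_div_mem (hc : 0 < c) (hr : 2 < r) :
    c ^ (r - 2) * ∑' k : ℕ, ((k : ℝ) + 1) / ((k : ℝ) + 1 + c) ^ r ∈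
      Set.Icc 0 (1 / (r - 2) + 1 / c - c ^ (r - 1) * ∑' k : ℕ, 1 / (c + k) ^ r) := by
  constructor
  · exact mul_nonneg (rpow_pos_of_pos hc _).le (tsum_nonneg fun k ↦ by positivity)
  · have hA := rpow_mul_tsum_add_nat_succ_rpow_neg_le hc (p := r - 1) (by linarith)
    rw [show r - 1 - 1 = r - 2 by ring, neg_sub] at hA
    have hc₂ : c ^ (r - 2) * c = c ^ (r - 1) := by
      rw [← rpow_add_one hc.ne', show r - 2 + 1 = r - 1 by ring]
    rw [tsum_succ_div_rpow hc hr, rpow_mul_tsum_one_div_add_nat_rpow hc (by linarith), mul_sub,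
      ← mul_assoc, hc₂]
    linarith

end NormalizedSeries

lemma abs_mul_add_mul_sub_one_lt {r c θ u w : ℝ} (hr : 2 < r) (hc : 0 < c)
    (hθ : θ ∈ Set.Icc (-1 : ℝ) 0) (hu : u ∈ Set.Icc (1 / (r - 1)) (1 / c + 1 / (r - 1)))
    (hw : w ∈ Set.Icc 0 (1 / (r - 2) + 1 / c - u)) :
    |r * (u + θ * w) - 1| < 2 * (1 / (r - 2) + r / c) := by
  obtain ⟨hθ₁, hθ₂⟩ := hθ
  obtain ⟨hu₁, hu₂⟩ := hu
  obtain ⟨hw₁, hw₂⟩ := hw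
  have hr₁ : r * (1 / (r - 1)) = 1 + 1 / (r - 1) := by field_simp [(by linarith : r - 1 ≠ 0)]; ring
  have hr₂ : r * (1 / (r - 2)) = 1 + 2 * (1 / (r - 2)) := by
    field_simp [(by linarith : r - 2 ≠ 0)]; ring
  have hlt : 1 / (r - 1) < 1 / (r - 2) := one_div_lt_one_div_of_lt (by linarith) (by linarith)
  have hpos : 0 < 1 / (r - 1) := one_div_pos.2 (by linarith)
  have hrc : 0 < r * (1 / c) := by positivity
  have hr₀ : 0 ≤ r := by linarith
  have hθw₁ := mul_le_mul_of_nonneg_left (mul_le_mul_of_nonneg_right hθ₁ hw₁) hr₀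
  have hθw₂ := mul_nonpos_of_nonneg_of_nonpos hr₀ (mul_nonpos_of_nonpos_of_nonneg hθ₂ hw₁)
  have hu₁' := mul_le_mul_of_nonneg_left hu₁ hr₀
  have hu₂' := mul_le_mul_of_nonneg_left hu₂ hr₀
  have hw₂' := mul_le_mul_of_nonneg_left hw₂ hr₀
  rw [abs_lt, div_eq_mul_one_div r c]
  constructor <;> linarith

theorem main_reduction (r θ E : ℝ) (hr : 2 < r) (hθ : θ ∈ Set.Icc (-1 : ℝ) 0)
    (n : ℕ) (hn : 0 < n)
    (hE : E = (1 / Real.pi) * ((∑' k : ℕ, 1 / ((n : ℝ) + k) ^ r) +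
      (θ / n) * ∑' k : ℕ, ((k : ℝ) + 1) / (((k : ℝ) + 1 + n) ^ r))) :
    ∃ θbar ∈ Set.Ioo (-2 / Real.pi) (2 / Real.pi),
      E = (1 / (n : ℝ) ^ r) * ((n : ℝ) / r) *
        (1 / Real.pi + θbar * (1 / (r - 2) + r / n)) := by
  have hc : (0 : ℝ) < n := Nat.cast_pos.2 hn
  set u := (n : ℝ) ^ (r - 1) * ∑' k : ℕ, 1 / ((n : ℝ) + k) ^ r with hu_def
  set w := (n : ℝ) ^ (r - 2) * ∑' k : ℕ, ((k : ℝ) + 1) / (((k : ℝ) + 1 + n) ^ r) with hw_def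
  set D := 1 / (r - 2) + r / n
  have hD : 0 < D := by
    have : 0 < r - 2 := by linarith
    positivity
  have hT := abs_lt.1 <| abs_mul_add_mul_sub_one_lt hr hc hθ
    (rpow_mul_tsum_one_div_mem hc (by linarith)) (rpow_mul_tsum_succ_div_mem hc hr)
  have hscale (x : ℝ) : x / π = x * D / (π * D) := by field_simp
  refine ⟨(r * (u + θ * w) - 1) / (π * D), ⟨?_, ?_⟩, ?_⟩
  · rw [hscale]
    exact div_lt_div_of_pos_right (by linarith) (by positivity)
  · rw [hscale 2]
    exact div_lt_div_of_pos_right (by linarith) (by positivity)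
  · have h₁ : (n : ℝ) ^ r = (n : ℝ) ^ (r - 1) * n := by rw [← rpow_add_one hc.ne', sub_add_cancel]
    have h₂ : (n : ℝ) ^ (r - 2) = (n : ℝ) ^ (r - 1) / n := by
      rw [← rpow_sub_one hc.ne', show r - 1 - 1 = r - 2 by ring]
    rw [hE, hu_def, hw_def, h₁, h₂]
    field_simp
    ring
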